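/- (Variance of a wavelet coefficient of fractional Brownian motion.) Let X be a fractional Brownian motion with parameters (H,σ), H ∈ (0,1), σ > 0, and let ψ satisfy the wavelet assumptions. Then for every j ≥ 0 and every k ∈ ℤ, Var(d_{j,k}) = σ²·c(ψ,H)·κ(H)·2^{−j(1+2H)}, where c(ψ,H) := (1/2)∫∫ ψ(s)ψ(t)(|t|^{2H} + |s|^{2H} − |t−s|^{2H}) ds dt; in particular Var(d_{j,k}) does not depend on k. -/

import Mathlib

open MeasureTheory ProbabilityTheory Real Filter

noncomputable section

/-- The constant `κ(H) = π / (H Γ(2H) sin(πH))`. -/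
def kappa (H : ℝ) : ℝ := π / (H * Real.Gamma (2 * H) * Real.sin (π * H))

/-- `X` is a fractional Brownian motion with Hurst parameter `H` and scale `σ`
under the probability measure `P`. -/
structure IsFBM {Ω : Type*} [MeasurableSpace Ω] (P : Measure Ω)
    (X : ℝ → Ω → ℝ) (H σ : ℝ) : Prop where
  meas : ∀ t, Measurable (X t)
  cont : ∀ ω, Continuous fun t => X t ω
  gauss : ∀ (m : ℕ) (t c : Fin m → ℝ), ∃ v : NNReal,
      P.map (fun ω => ∑ i, c i * X (t i) ω) = gaussianReal 0 v
  cov : ∀ s t : ℝ, ∫ ω, X s ω * X t ω ∂P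
      = σ ^ 2 * kappa H / 2 * (|s| ^ (2 * H) + |t| ^ (2 * H) - |s - t| ^ (2 * H))

/-- Wavelet assumptions: bounded, measurable, supported in `[0,S]`, not a.e. zero,
two vanishing moments. -/
structure IsWavelet (ψ : ℝ → ℝ) (S : ℕ) : Prop where
  hS : 1 ≤ S
  meas : Measurable ψ
  bdd : ∃ C, ∀ t, |ψ t| ≤ C
  supp : ∀ t : ℝ, t ∉ Set.Icc (0 : ℝ) (S : ℝ) → ψ t = 0
  nonzero : ¬ (∀ᵐ t ∂(volume : Measure ℝ), ψ t = 0)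
  van0 : ∫ t, ψ t = 0
  van1 : ∫ t, t * ψ t = 0

/-- `ψ_{j,k}(t) = 2^{j/2} ψ(2^j t - k)`. -/
def wavFn (ψ : ℝ → ℝ) (j : ℕ) (k : ℤ) (t : ℝ) : ℝ :=
  (2 : ℝ) ^ ((j : ℝ) / 2) * ψ ((2 : ℝ) ^ j * t - (k : ℝ))

/-- The random wavelet coefficient `d_{j,k} = ∫ ψ_{j,k}(s) X_s ds`. -/
def dcoef {Ω : Type*} (ψ : ℝ → ℝ) (X : ℝ → Ω → ℝ) (j : ℕ) (k : ℤ) (ω : Ω) : ℝ :=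
  ∫ s, wavFn ψ j k s * X s ω

/-- The energy level `Q_j = ∑_{k=0}^{2^{j-1}-1} d_{j,k}^2`. -/
def energy {Ω : Type*} (ψ : ℝ → ℝ) (X : ℝ → Ω → ℝ) (j : ℕ) (ω : Ω) : ℝ :=
  ∑ k ∈ Finset.range (2 ^ (j - 1)), (dcoef ψ X j (k : ℤ) ω) ^ 2


/-- `c(ψ,H) = (1/2)∫∫ ψ(s)ψ(t)(|t|^{2H}+|s|^{2H}-|t-s|^{2H}) ds dt`. -/
def cpsi (ψ : ℝ → ℝ) (H : ℝ) : ℝ :=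
  (1 / 2) * ∫ s : ℝ, ∫ t : ℝ,
    ψ s * ψ t * (|t| ^ (2 * H) + |s| ^ (2 * H) - |t - s| ^ (2 * H))

/-!
The substitution `u = 2^j s - k` turns `d_{j,k}` into `2^{-j/2} ∫ ψ(u) X_{φ u} du` with
`φ u = (u + k) / 2^j`.
By Fubini, the variance of such a linear functional of a centred square-integrable process is
`∫∫ ψ(u) ψ(v) E[X_{φ u} X_{φ v}]`. In the fBm covariance the terms `|φ u|^{2H}` and
`|φ v|^{2H}` depend on one variable only and are killed by `∫ ψ = 0`; what remains,
`-|φ u - φ v|^{2H} = -2^{-2jH} |u - v|^{2H}`, no longer involves `k`. The same cancellation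
gives `c(ψ,H) = -½ ∫∫ ψ(u) ψ(v) |u - v|^{2H}`.
-/

open scoped ENNReal

theorem MeasureTheory.Integrable.mul_continuous_of_eq_zero_off {α : Type*} [TopologicalSpace α]
    [T2Space α] [MeasurableSpace α] [OpensMeasurableSpace α] [SecondCountableTopologyEither α ℝ]
    {μ : Measure α} {f g : α → ℝ} (hf : Integrable f μ) {K : Set α} (hK : IsCompact K)
    (hfK : ∀ x ∉ K, f x = 0) (hg : Continuous g) : Integrable (fun x => f x * g x) μ := by
  refine (integrableOn_iff_integrable_of_support_subset fun x hx => ?_).1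
    (hf.integrableOn.mul_continuousOn hg.continuousOn hK)
  by_contra hxK
  simp [hfK x hxK] at hx

namespace IsWavelet

variable {ψ : ℝ → ℝ} {S : ℕ}

theorem integrable (hψ : IsWavelet ψ S) : Integrable ψ := by
  obtain ⟨C, hC⟩ := hψ.bdd
  refine (integrableOn_iff_integrable_of_support_subset fun x hx => ?_).1
    (Measure.integrableOn_of_bounded (μ := volume) (s := Set.Icc 0 (S : ℝ)) (M := C) (by simp)
      hψ.meas.aestronglyMeasurable (ae_of_all _ fun t => hC t))
  by_contra hxK
  exact hx (hψ.supp x hxK)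

theorem integrable_mul_continuous (hψ : IsWavelet ψ S) {g : ℝ → ℝ} (hg : Continuous g) :
    Integrable (fun t => ψ t * g t) :=
  hψ.integrable.mul_continuous_of_eq_zero_off isCompact_Icc hψ.supp hg

theorem integrable_prod_mul_continuous (hψ : IsWavelet ψ S) {g : ℝ × ℝ → ℝ}
    (hg : Continuous g) :
    Integrable (fun p : ℝ × ℝ => ψ p.1 * ψ p.2 * g p) (volume.prod volume) := by
  refine (hψ.integrable.mul_prod hψ.integrable).mul_continuous_of_eq_zero_off
    (isCompact_Icc.prod isCompact_Icc) (K := Set.Icc (0 : ℝ) S ×ˢ Set.Icc (0 : ℝ) S)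
    (fun p hp => ?_) hg
  rcases not_and_or.1 hp with h | h <;> simp [hψ.supp _ h]

end IsWavelet

section SecondMoments

variable {Ω E : Type*} [MeasurableSpace Ω] [MeasurableSpace E] {P : Measure Ω}
  {μ : Measure E} [SFinite μ]

theorem integrable_prod_of_integral_norm_le [SFinite P] {G : Ω × E → ℝ} (hG : Measurable G)
    (hGint : ∀ e, Integrable (fun ω => G (ω, e)) P) {g : E → ℝ} (hg : Integrable g μ)
    (hbd : ∀ e, ∫ ω, ‖G (ω, e)‖ ∂P ≤ g e) :
    Integrable G (P.prod μ) :=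
  (integrable_prod_iff' hG.aestronglyMeasurable).2 ⟨ae_of_all _ hGint,
    hg.mono' hG.norm.stronglyMeasurable.integral_prod_left'.aestronglyMeasurable
      (ae_of_all _ fun e => by
        rw [Real.norm_of_nonneg (integral_nonneg fun _ => norm_nonneg _)]
        exact hbd e)⟩

theorem integral_abs_mul_le_of_memLp_two {U V : Ω → ℝ} (hU : MemLp U 2 P) (hV : MemLp V 2 P) :
    ∫ ω, |U ω * V ω| ∂P ≤ (∫ ω, U ω ^ 2 ∂P + ∫ ω, V ω ^ 2 ∂P) / 2 := by
  rw [← integral_add hU.integrable_sq hV.integrable_sq, ← integral_div]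
  refine integral_mono (hU.integrable_mul hV).abs
    ((hU.integrable_sq.add hV.integrable_sq).div_const 2) fun ω => ?_
  rw [abs_mul]
  nlinarith [two_mul_le_add_sq |U ω| |V ω|, sq_abs (U ω), sq_abs (V ω)]

variable [IsProbabilityMeasure P] {Y : E → Ω → ℝ} {f : E → ℝ} {M : ℝ}

theorem integrable_prod_mul_process (hY : Measurable (Function.uncurry Y))
    (hY2 : ∀ t, MemLp (Y t) 2 P) (hM : ∀ t, f t ≠ 0 → ∫ ω, Y t ω ^ 2 ∂P ≤ M)
    (hfm : Measurable f) (hf : Integrable f μ) :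
    Integrable (fun q : Ω × E => f q.2 * Y q.2 q.1) (P.prod μ) := by
  refine integrable_prod_of_integral_norm_le
    ((hfm.comp measurable_snd).mul (hY.comp measurable_swap))
    (fun t => ((hY2 t).integrable one_le_two).const_mul (f t))
    (hf.norm.mul_const ((1 + M) / 2)) fun t => ?_
  rcases eq_or_ne (f t) 0 with ht | ht
  · simp [ht]
  have hY1 := integral_abs_mul_le_of_memLp_two (memLp_const (1 : ℝ)) (hY2 t)
  simp only [one_mul, one_pow, integral_const, probReal_univ, smul_eq_mul, mul_one] at hY1
  calc ∫ ω, ‖f t * Y t ω‖ ∂P = ‖f t‖ * ∫ ω, |Y t ω| ∂P := by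
        simp only [norm_mul, integral_const_mul, Real.norm_eq_abs]
    _ ≤ ‖f t‖ * ((1 + M) / 2) := by gcongr; linarith [hM t ht]

theorem integrable_prod_mul_mul_process (hY : Measurable (Function.uncurry Y))
    (hY2 : ∀ t, MemLp (Y t) 2 P) (hM : ∀ t, f t ≠ 0 → ∫ ω, Y t ω ^ 2 ∂P ≤ M)
    (hfm : Measurable f) (hf : Integrable f μ) :
    Integrable (fun q : Ω × (E × E) => f q.2.1 * Y q.2.1 q.1 * (f q.2.2 * Y q.2.2 q.1))
      (P.prod (μ.prod μ)) := by
  have hG : Measurable fun q : Ω × E => f q.2 * Y q.2 q.1 :=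
    (hfm.comp measurable_snd).mul (hY.comp measurable_swap)
  refine integrable_prod_of_integral_norm_le
    ((hG.comp (measurable_fst.prodMk (measurable_fst.comp measurable_snd))).mul
      (hG.comp (measurable_fst.prodMk (measurable_snd.comp measurable_snd))))
    (fun p => ?_) ((hf.norm.mul_prod hf.norm).mul_const M) fun p => ?_
  · refine (((hY2 p.1).integrable_mul (hY2 p.2)).const_mul (f p.1 * f p.2)).congr
      (ae_of_all _ fun ω => ?_)
    simp only [Pi.mul_apply]
    ring
  rcases eq_or_ne (f p.1) 0 with h1 | h1
  · simp [h1]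
  rcases eq_or_ne (f p.2) 0 with h2 | h2
  · simp [h2]
  have hY12 := integral_abs_mul_le_of_memLp_two (hY2 p.1) (hY2 p.2)
  calc ∫ ω, ‖f p.1 * Y p.1 ω * (f p.2 * Y p.2 ω)‖ ∂P
      = ‖f p.1‖ * ‖f p.2‖ * ∫ ω, |Y p.1 ω * Y p.2 ω| ∂P := by
        rw [← integral_const_mul]
        congr 1 with ω
        simp only [norm_mul, Real.norm_eq_abs, abs_mul]
        ring
    _ ≤ ‖f p.1‖ * ‖f p.2‖ * M := by gcongr; linarith [hM _ h1, hM _ h2]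

theorem variance_integral_mul_process (hY : Measurable (Function.uncurry Y))
    (hY2 : ∀ t, MemLp (Y t) 2 P) (hM : ∀ t, f t ≠ 0 → ∫ ω, Y t ω ^ 2 ∂P ≤ M)
    (hfm : Measurable f) (hf : Integrable f μ) (hmean : ∀ t, ∫ ω, Y t ω ∂P = 0) :
    variance (fun ω => ∫ t, f t * Y t ω ∂μ) P
      = ∫ p, f p.1 * f p.2 * ∫ ω, Y p.1 ω * Y p.2 ω ∂P ∂(μ.prod μ) := by
  have h1 := integrable_prod_mul_process hY hY2 hM hfm hf
  have h2 := integrable_prod_mul_mul_process hY hY2 hM hfm hf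
  have hmeanZ : ∫ ω, ∫ t, f t * Y t ω ∂μ ∂P = 0 := by
    rw [integral_integral_swap h1]
    simp [integral_const_mul, hmean]
  rw [variance_of_integral_eq_zero h1.integral_prod_left.aemeasurable hmeanZ]
  calc ∫ ω, (∫ t, f t * Y t ω ∂μ) ^ 2 ∂P
      = ∫ ω, ∫ p, f p.1 * Y p.1 ω * (f p.2 * Y p.2 ω) ∂(μ.prod μ) ∂P := by
        congr 1 with ω
        rw [sq]
        exact (integral_prod_mul (fun t => f t * Y t ω) (fun t => f t * Y t ω)).symm
    _ = ∫ p, ∫ ω, f p.1 * Y p.1 ω * (f p.2 * Y p.2 ω) ∂P ∂(μ.prod μ) :=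
        integral_integral_swap h2
    _ = ∫ p, f p.1 * f p.2 * ∫ ω, Y p.1 ω * Y p.2 ω ∂P ∂(μ.prod μ) := by
        simp_rw [← integral_const_mul, mul_mul_mul_comm]

end SecondMoments

namespace IsFBM

variable {Ω : Type*} [MeasurableSpace Ω] {P : Measure Ω} {X : ℝ → Ω → ℝ} {H σ : ℝ}

theorem measurable_uncurry (hX : IsFBM P X H σ) : Measurable (Function.uncurry X) :=
  measurable_uncurry_of_continuous_of_measurable hX.cont hX.meas

theorem exists_hasLaw_gaussianReal (hX : IsFBM P X H σ) (t : ℝ) :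
    ∃ v, HasLaw (X t) (gaussianReal 0 v) P := by
  obtain ⟨v, hv⟩ := hX.gauss 1 (fun _ => t) (fun _ => 1)
  exact ⟨v, (hX.meas t).aemeasurable, by simpa using hv⟩

theorem integral_eq_zero (hX : IsFBM P X H σ) (t : ℝ) : ∫ ω, X t ω ∂P = 0 := by
  obtain ⟨v, hv⟩ := hX.exists_hasLaw_gaussianReal t
  rw [hv.integral_eq, integral_id_gaussianReal]

theorem memLp (hX : IsFBM P X H σ) (t : ℝ) {p : ℝ≥0∞} (hp : p ≠ ∞) : MemLp (X t) p P := by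
  obtain ⟨v, hv⟩ := hX.exists_hasLaw_gaussianReal t
  have hid := memLp_id_gaussianReal' (μ := 0) (v := v) p hp
  rw [← hv.map_eq] at hid
  exact (memLp_map_measure_iff aestronglyMeasurable_id hv.aemeasurable).1 hid

theorem integral_sq (hX : IsFBM P X H σ) (hH : H ≠ 0) (t : ℝ) :
    ∫ ω, X t ω ^ 2 ∂P = σ ^ 2 * kappa H * |t| ^ (2 * H) := by
  simp_rw [sq, hX.cov, sub_self, abs_zero, Real.zero_rpow (mul_ne_zero two_ne_zero hH)]
  ring

end IsFBM

theorem integral_prod_mul_add_sub_of_integral_eq_zero {α : Type*} [MeasurableSpace α]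
    {μ : Measure α} [SFinite μ] {ψ g : α → ℝ} {h : α × α → ℝ} (hψ0 : ∫ x, ψ x ∂μ = 0)
    (hψ : Integrable ψ μ) (hψg : Integrable (fun x => ψ x * g x) μ)
    (hh : Integrable (fun p : α × α => ψ p.1 * ψ p.2 * h p) (μ.prod μ)) :
    ∫ p, ψ p.1 * ψ p.2 * (g p.1 + g p.2 - h p) ∂(μ.prod μ)
      = -∫ p, ψ p.1 * ψ p.2 * h p ∂(μ.prod μ) := by
  have hsplit : (fun p : α × α => ψ p.1 * ψ p.2 * (g p.1 + g p.2 - h p))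
      = fun p => ψ p.1 * g p.1 * ψ p.2 + ψ p.1 * (ψ p.2 * g p.2) - ψ p.1 * ψ p.2 * h p := by
    funext p; ring
  have hadd : Integrable (fun p : α × α => ψ p.1 * g p.1 * ψ p.2 + ψ p.1 * (ψ p.2 * g p.2))
      (μ.prod μ) := (hψg.mul_prod hψ).add (hψ.mul_prod hψg)
  rw [hsplit, integral_sub hadd hh, integral_add (hψg.mul_prod hψ) (hψ.mul_prod hψg),
    integral_prod_mul (fun x => ψ x * g x) ψ, integral_prod_mul ψ (fun x => ψ x * g x), hψ0]
  ring

theorem integral_comp_mul_sub_mul (g h : ℝ → ℝ) {a : ℝ} (ha : 0 < a) (b : ℝ) :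
    ∫ s, g (a * s - b) * h s = a⁻¹ * ∫ u, g u * h ((u + b) / a) := by
  have hsub := Measure.integral_comp_mul_left (fun x => g (x - b) * h (x / a)) a
  simp only [mul_div_cancel_left₀ _ ha.ne'] at hsub
  rw [hsub, abs_of_pos (inv_pos.2 ha), smul_eq_mul,
    ← integral_add_right_eq_self _ b]
  simp

theorem dcoef_eq_mul_integral {Ω : Type*} (ψ : ℝ → ℝ) (X : ℝ → Ω → ℝ) (j : ℕ) (k : ℤ) :
    dcoef ψ X j k = fun ω => (2 : ℝ) ^ ((j : ℝ) / 2) * ((2 : ℝ) ^ j)⁻¹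
      * ∫ u, ψ u * X ((u + k) / 2 ^ j) ω := by
  funext ω
  simp only [dcoef, wavFn, mul_assoc, integral_const_mul]
  rw [integral_comp_mul_sub_mul ψ (fun s => X s ω) (by positivity)]

namespace IsWavelet

variable {ψ : ℝ → ℝ} {S : ℕ} {H : ℝ}

theorem integral_prod_mul_fbmKernel_comp_affine (hψ : IsWavelet ψ S) (hH : 0 ≤ H)
    {a : ℝ} (ha : 0 < a) (b : ℝ) :
    ∫ p : ℝ × ℝ, ψ p.1 * ψ p.2 * (|(p.1 + b) / a| ^ (2 * H) + |(p.2 + b) / a| ^ (2 * H)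
        - |(p.1 + b) / a - (p.2 + b) / a| ^ (2 * H)) ∂(volume.prod volume)
      = -((a ^ (2 * H))⁻¹ * ∫ p : ℝ × ℝ, ψ p.1 * ψ p.2 * |p.1 - p.2| ^ (2 * H)
          ∂(volume.prod volume)) := by
  have h2H : 0 ≤ 2 * H := by linarith
  have hscale : ∀ p : ℝ × ℝ, |(p.1 + b) / a - (p.2 + b) / a| ^ (2 * H)
      = (a ^ (2 * H))⁻¹ * |p.1 - p.2| ^ (2 * H) := fun p => by
    rw [← sub_div, add_sub_add_right_eq_sub, abs_div, abs_of_pos ha,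
      Real.div_rpow (abs_nonneg _) ha.le, div_eq_inv_mul]
  refine (integral_prod_mul_add_sub_of_integral_eq_zero
    (g := fun t => |(t + b) / a| ^ (2 * H))
    (h := fun p => |(p.1 + b) / a - (p.2 + b) / a| ^ (2 * H)) hψ.van0 hψ.integrable
    (hψ.integrable_mul_continuous (by fun_prop))
    (hψ.integrable_prod_mul_continuous (by fun_prop))).trans ?_
  simp_rw [hscale, mul_left_comm _ (a ^ (2 * H))⁻¹, integral_const_mul]

theorem cpsi_eq (hψ : IsWavelet ψ S) (hH : 0 ≤ H) :
    cpsi ψ H = -(1 / 2) * ∫ p : ℝ × ℝ, ψ p.1 * ψ p.2 * |p.1 - p.2| ^ (2 * H)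
      ∂(volume.prod volume) := by
  have hker := hψ.integral_prod_mul_fbmKernel_comp_affine hH one_pos 0
  simp only [add_zero, div_one, Real.one_rpow, inv_one, one_mul] at hker
  have h2H : 0 ≤ 2 * H := by linarith
  have hint : Integrable (fun p : ℝ × ℝ => ψ p.1 * ψ p.2
      * (|p.2| ^ (2 * H) + |p.1| ^ (2 * H) - |p.2 - p.1| ^ (2 * H))) (volume.prod volume) :=
    hψ.integrable_prod_mul_continuous (by fun_prop)
  calc cpsi ψ H
      = 1 / 2 * ∫ p : ℝ × ℝ, ψ p.1 * ψ p.2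
          * (|p.2| ^ (2 * H) + |p.1| ^ (2 * H) - |p.2 - p.1| ^ (2 * H))
          ∂(volume.prod volume) := by
        rw [cpsi, integral_prod _ hint]
    _ = 1 / 2 * ∫ p : ℝ × ℝ, ψ p.1 * ψ p.2
          * (|p.1| ^ (2 * H) + |p.2| ^ (2 * H) - |p.1 - p.2| ^ (2 * H))
          ∂(volume.prod volume) := by
        congr 2 with p
        rw [abs_sub_comm]
        ring
    _ = _ := by rw [hker]; ring

theorem exists_integral_sq_fbm_comp_le (hψ : IsWavelet ψ S) {Ω : Type*} [MeasurableSpace Ω]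
    {P : Measure Ω} {X : ℝ → Ω → ℝ} {σ : ℝ} (hX : IsFBM P X H σ) (hH : 0 < H) {φ : ℝ → ℝ}
    (hφ : Continuous φ) : ∃ M, ∀ u, ψ u ≠ 0 → ∫ ω, X (φ u) ω ^ 2 ∂P ≤ M := by
  have h2H : 0 ≤ 2 * H := by linarith
  obtain ⟨M, hM⟩ := (isCompact_Icc (a := (0 : ℝ)) (b := S)).exists_bound_of_continuousOn
    (f := fun u => σ ^ 2 * kappa H * |φ u| ^ (2 * H)) (by fun_prop)
  refine ⟨M, fun u hu => ?_⟩
  rw [hX.integral_sq hH.ne']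
  exact (Real.le_norm_self _).trans (hM u (by_contra fun h => hu (hψ.supp u h)))

end IsWavelet

/-- Variance of a wavelet coefficient of fractional Brownian motion:
`Var(d_{j,k}) = σ² c(ψ,H) κ(H) 2^{-j(1+2H)}`, independently of `k`. -/
theorem variance_dcoef
    (H σ : ℝ) (hH : H ∈ Set.Ioo (0 : ℝ) 1)
    (ψ : ℝ → ℝ) (S : ℕ) (hψ : IsWavelet ψ S)
    (Ω : Type) (_ : MeasurableSpace Ω) (P : Measure Ω) (hP : IsProbabilityMeasure P)
    (X : ℝ → Ω → ℝ) (hX : IsFBM P X H σ)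
    (j : ℕ) (k : ℤ) :
    variance (dcoef ψ X j k) P
      = σ ^ 2 * cpsi ψ H * kappa H * (2 : ℝ) ^ (-((j : ℝ) * (1 + 2 * H))) := by
  set c : ℝ := 2 ^ j with hc_def
  have hc : 0 < c := by positivity
  obtain ⟨M, hM⟩ := hψ.exists_integral_sq_fbm_comp_le hX hH.1
    (φ := fun u => (u + k) / c) (by fun_prop)
  have hvar := variance_integral_mul_process (Y := fun u => X ((u + k) / c))
    (hX.measurable_uncurry.comp (f := fun q : ℝ × Ω => ((q.1 + k) / c, q.2)) (by fun_prop))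
    (fun u => hX.memLp _ ENNReal.ofNat_ne_top) hM hψ.meas hψ.integrable
    (fun u => hX.integral_eq_zero _)
  have hpow : ((2 : ℝ) ^ ((j : ℝ) / 2) * c⁻¹) ^ 2 * (c ^ (2 * H))⁻¹
      = 2 ^ (-((j : ℝ) * (1 + 2 * H))) := by
    have h2 : (0 : ℝ) ≤ 2 := by norm_num
    rw [hc_def, ← Real.rpow_natCast 2 j, ← Real.rpow_neg h2, ← Real.rpow_mul h2,
      ← Real.rpow_neg h2, ← Real.rpow_add two_pos, ← Real.rpow_natCast, ← Real.rpow_mul h2,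
      ← Real.rpow_add two_pos]
    congr 1
    push_cast
    ring
  rw [dcoef_eq_mul_integral, variance_const_mul, hvar]
  simp_rw [hX.cov, mul_left_comm _ (σ ^ 2 * kappa H / 2), integral_const_mul,
    hψ.integral_prod_mul_fbmKernel_comp_affine hH.1.le hc, hψ.cpsi_eq hH.1.le, ← hpow]
  ring
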